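/- Let f : ℝ → ℂ be 2π-periodic and Lebesgue integrable on [−π, π], and let g : ℝ → ℂ be 2π-periodic with bounded variation. Then the convolution f∗g(x) = ∫_{−π}^{π} f(x − t) g(t) dt is a continuous 2π-periodic function of x and satisfies ‖f∗g‖_∞ ≤ ‖f‖_T · ‖g‖_BV, i.e. sup_{x∈ℝ} |f∗g(x)| ≤ ‖f‖_T (sup_ℝ |g| + V g). -/

import Mathlib

open MeasureTheory Real

/-- The Alexiewicz norm of a `2π`-periodic function. -/
noncomputable def alexNorm (f : ℝ → ℂ) : ℝ :=
  sSup {r : ℝ | ∃ α β : ℝ, α ≤ β ∧ β ≤ α + 2 * π ∧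
    r = ‖∫ t in α..β, f t‖}

/-- The variation of a `2π`-periodic function over a period. -/
noncomputable def periodVariation (g : ℝ → ℂ) : ENNReal :=
  ⨆ a : ℝ, eVariationOn g (Set.Icc a (a + 2 * π))

/-- Convolution on the torus. -/
noncomputable def torusConv (f g : ℝ → ℂ) (x : ℝ) : ℂ :=
  ∫ t in (-π)..π, f (x - t) * g t

/-!
The bound is an integral form of Abel's summation by parts. Fix `x` and put
`Φ(s) = ∫_{-π}^{s} f(x - t) dt`, so that `‖Φ(s)‖ ≤ ‖f‖_T` for `s ∈ [-π, π]`. Replacing `g` by its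
values at the right endpoints of a uniform partition `(uᵢ)` of `[-π, π]` turns the convolution
integral into `∑ (Φ(uᵢ₊₁) - Φ(uᵢ)) g(uᵢ₊₁) = Φ(π) g(π) - ∑ Φ(uᵢ) (g(uᵢ₊₁) - g(uᵢ))`, which is at
most `‖f‖_T (‖g(π)‖ + V g)`. A function of bounded variation is continuous almost everywhere, so
these step functions converge to `g` almost everywhere as the mesh tends to zero, and dominated
convergence gives the bound. Continuity of `f∗g` is dominated convergence again, applied to
`f∗g(x) = ∫_{-π}^{π} f(t) g(x - t) dt`.
-/

open Filter Topology Set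
open scoped Interval

namespace Finset

theorem sum_range_sub_mul_eq {R : Type*} [Ring R] (F G : ℕ → R) (N : ℕ) :
    ∑ i ∈ range N, (F (i + 1) - F i) * G (i + 1) =
      F N * G N - F 0 * G 0 - ∑ i ∈ range N, F i * (G (i + 1) - G i) := by
  rw [eq_sub_iff_add_eq, ← sum_add_distrib, ← sum_range_sub (fun i => F i * G i)]
  exact sum_congr rfl fun i _ => by noncomm_ring

theorem norm_sum_range_sub_mul_le {R : Type*} [SeminormedRing R] {F G : ℕ → R} {N : ℕ} {K : ℝ} (hF₀ : F 0 = 0)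
    (hF : ∀ i ≤ N, ‖F i‖ ≤ K) :
    ‖∑ i ∈ range N, (F (i + 1) - F i) * G (i + 1)‖ ≤
      K * (‖G N‖ + ∑ i ∈ range N, ‖G (i + 1) - G i‖) := by
  rw [sum_range_sub_mul_eq, hF₀, zero_mul, sub_zero, mul_add, mul_sum]
  refine (norm_sub_le _ _).trans
    (add_le_add ?_ ((norm_sum_le _ _).trans (sum_le_sum fun i hi => ?_)))
  · exact (norm_mul_le _ _).trans (mul_le_mul_of_nonneg_right (hF N le_rfl) (norm_nonneg _))
  · exact (norm_mul_le _ _).trans (mul_le_mul_of_nonneg_right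
      (hF i (mem_range.mp hi).le) (norm_nonneg _))

end Finset

theorem BoundedVariationOn.sum_norm_sub_le {E : Type*} [SeminormedAddCommGroup E] {g : ℝ → E}
    {s : Set ℝ} (hg : BoundedVariationOn g s) {u : ℕ → ℝ} {N : ℕ} (hu : MonotoneOn u (Iic N))
    (us : ∀ i ≤ N, u i ∈ s) :
    ∑ i ∈ Finset.range N, ‖g (u (i + 1)) - g (u i)‖ ≤ (eVariationOn g s).toReal := by
  simp_rw [← dist_eq_norm, dist_edist]
  rw [← ENNReal.toReal_sum fun _ _ => edist_ne_top _ _]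
  exact ENNReal.toReal_mono hg (eVariationOn.sum_le_of_monotoneOn_Iic hu us)

theorem BoundedVariationOn.norm_le {E : Type*} [SeminormedAddCommGroup E] {g : ℝ → E}
    {s : Set ℝ} (hg : BoundedVariationOn g s) {x y : ℝ} (hx : x ∈ s) (hy : y ∈ s) :
    ‖g x‖ ≤ ‖g y‖ + (eVariationOn g s).toReal := by
  have := hg.dist_le hx hy
  rw [dist_eq_norm] at this
  linarith [norm_le_norm_add_norm_sub' (g x) (g y)]

theorem eVariationOn_Icc_add_natCast_mul_le {E : Type*} [PseudoEMetricSpace E] {g : ℝ → E} {T : ℝ}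
    (hT : 0 ≤ T) {M : ENNReal} (hM : ∀ a, eVariationOn g (Icc a (a + T)) ≤ M) (a : ℝ) (n : ℕ) :
    eVariationOn g (Icc a (a + n * T)) ≤ n * M := by
  induction n with
  | zero => simp
  | succ n ih =>
    have h₁ : a ≤ a + n * T := le_add_of_nonneg_right (by positivity)
    rw [show a + ((n + 1 : ℕ) : ℝ) * T = a + n * T + T by push_cast; ring]
    have hsplit := eVariationOn.Icc_add_Icc g h₁ (le_add_of_nonneg_right hT) (mem_univ _)
    simp only [univ_inter] at hsplit
    rw [← hsplit]
    calc _ ≤ n * M + M := add_le_add ih (hM _)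
      _ = (n + 1 : ℕ) * M := by push_cast; ring

theorem locallyBoundedVariationOn_of_eVariationOn_Icc_add_le {E : Type*} [PseudoEMetricSpace E]
    {g : ℝ → E} {T : ℝ} (hT : 0 < T) {M : ENNReal} (hM₀ : M ≠ ⊤)
    (hM : ∀ a, eVariationOn g (Icc a (a + T)) ≤ M) :
    LocallyBoundedVariationOn g univ := by
  intro a b _ _
  obtain ⟨n, hn⟩ := exists_nat_ge ((b - a) / T)
  have hb : b ≤ a + n * T := by rw [div_le_iff₀ hT] at hn; linarith
  rw [univ_inter]
  refine ne_top_of_le_ne_top ?_ ((eVariationOn.mono g (Icc_subset_Icc_right hb)).trans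
    (eVariationOn_Icc_add_natCast_mul_le hT.le hM a n))
  exact ENNReal.mul_ne_top (ENNReal.natCast_ne_top n) hM₀

theorem aestronglyMeasurable_of_ae_continuousAt {α β : Type*} [MeasurableSpace α]
    [TopologicalSpace α] [OpensMeasurableSpace α] [TopologicalSpace β]
    [TopologicalSpace.PseudoMetrizableSpace β]
    [SecondCountableTopologyEither α β] {μ : Measure α} {g : α → β}
    (hg : ∀ᵐ x ∂μ, ContinuousAt g x) : AEStronglyMeasurable g μ := by
  rw [← Measure.restrict_eq_self_of_ae_mem hg]
  exact ContinuousOn.aestronglyMeasurable (fun x (hx : ContinuousAt g x) => hx.continuousWithinAt)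
    (IsGδ.setOfPred_continuousAt g).measurableSet

noncomputable def roundUp (a h t : ℝ) : ℝ := a + ⌈(t - a) / h⌉ * h

section RoundUp

variable {a h t : ℝ}

theorem le_roundUp (hh : 0 < h) (t : ℝ) : t ≤ roundUp a h t := by
  have := (div_le_iff₀ hh).mp (Int.le_ceil ((t - a) / h))
  rw [roundUp]; linarith

theorem roundUp_le (hh : 0 < h) (t : ℝ) : roundUp a h t ≤ t + h := by
  have := mul_le_mul_of_nonneg_right (Int.ceil_lt_add_one ((t - a) / h)).le hh.le
  rw [add_mul, one_mul, div_mul_cancel₀ _ hh.ne'] at this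
  rw [roundUp]; linarith

theorem roundUp_le_of_le (hh : 0 < h) {N : ℤ} (ht : t ≤ a + N * h) : roundUp a h t ≤ a + N * h := by
  have : ⌈(t - a) / h⌉ ≤ N := Int.ceil_le.mpr ((div_le_iff₀ hh).mpr (by linarith))
  rw [roundUp]; gcongr

theorem roundUp_eq_of_mem_Ioc (hh : 0 < h) {i : ℕ}
    (ht : t ∈ Ioc (a + i * h) (a + (i + 1 : ℕ) * h)) : roundUp a h t = a + (i + 1 : ℕ) * h := by
  have hceil : ⌈(t - a) / h⌉ = i + 1 := by
    rw [Int.ceil_eq_iff, lt_div_iff₀ hh, div_le_iff₀ hh]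
    push_cast at ht ⊢
    constructor <;> linarith [ht.1, ht.2]
  rw [roundUp, hceil]; push_cast; ring

theorem measurable_comp_roundUp {E : Type*} [MeasurableSpace E] (g : ℝ → E) :
    Measurable fun t => g (roundUp a h t) :=
  (measurable_of_countable fun k : ℤ => g (a + k * h)).comp
    (Int.measurable_ceil.comp ((measurable_id.sub_const a).div_const h))

end RoundUp

section Stieltjes

variable {𝕜 : Type*} [RCLike 𝕜] {φ g : ℝ → 𝕜} {a b K : ℝ}

theorem intervalIntegral_mul_comp_roundUp {h : ℝ} (hh : 0 < h) {N : ℕ}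
    (hφ : IntervalIntegrable φ volume a (a + N * h)) :
    ∫ t in a..a + N * h, φ t * g (roundUp a h t) =
      ∑ i ∈ Finset.range N,
        (∫ t in (a + i * h)..(a + (i + 1 : ℕ) * h), φ t) * g (a + (i + 1 : ℕ) * h) := by
  have hmem : ∀ i ≤ N, a + i * h ∈ uIcc a (a + N * h) := fun i hi =>
    mem_uIcc_of_le (le_add_of_nonneg_right (by positivity)) (by gcongr)
  have hpiece : ∀ i : ℕ, ∀ᵐ t, t ∈ Ι (a + i * h) (a + (i + 1 : ℕ) * h) →
      φ t * g (roundUp a h t) = φ t * g (a + (i + 1 : ℕ) * h) := fun i =>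
    Eventually.of_forall fun t ht => by
      rw [uIoc_of_le (by gcongr; simp)] at ht
      rw [roundUp_eq_of_mem_Ioc hh ht]
  have hint : ∀ i < N, IntervalIntegrable (fun t => φ t * g (roundUp a h t)) volume
      (a + i * h) (a + (i + 1 : ℕ) * h) := fun i hi =>
    ((hφ.mono_set (uIcc_subset_uIcc (hmem i hi.le) (hmem (i + 1) hi))).mul_const _).congr_ae
      (Filter.EventuallyEq.symm ((ae_restrict_iff' measurableSet_uIoc).mpr (hpiece i)))
  have hsum := intervalIntegral.sum_integral_adjacent_intervals (a := fun k : ℕ => a + k * h) hint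
  simp only [Nat.cast_zero, zero_mul, add_zero] at hsum
  rw [← hsum]
  refine Finset.sum_congr rfl fun i _ => ?_
  rw [intervalIntegral.integral_congr_ae (hpiece i), intervalIntegral.integral_mul_const]

theorem norm_sum_intervalIntegral_mul_le {u : ℕ → ℝ} {N : ℕ} (hu : MonotoneOn u (Iic N))
    (hu₀ : u 0 = a) (huN : u N = b) (hφ : IntervalIntegrable φ volume a b)
    (hg : BoundedVariationOn g (Icc a b)) (hK : ∀ s ∈ Icc a b, ‖∫ t in a..s, φ t‖ ≤ K) :
    ‖∑ i ∈ Finset.range N, (∫ t in u i..u (i + 1), φ t) * g (u (i + 1))‖ ≤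
      K * (‖g b‖ + (eVariationOn g (Icc a b)).toReal) := by
  have hu_mem : ∀ i ≤ N, u i ∈ Icc a b := fun i hi => by
    rw [← hu₀, ← huN]
    exact ⟨hu (Nat.zero_le N) hi (Nat.zero_le i), hu hi (le_refl N) hi⟩
  have hφ' : ∀ s ∈ Icc a b, IntervalIntegrable φ volume a s := fun s hs =>
    hφ.mono_set (uIcc_subset_uIcc_left (mem_uIcc_of_le hs.1 hs.2))
  have hK₀ : 0 ≤ K := (norm_nonneg _).trans (hK a (hu₀ ▸ hu_mem 0 (Nat.zero_le N)))
  have hdiff : ∀ i ∈ Finset.range N, (∫ t in u i..u (i + 1), φ t) =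
      (∫ t in a..u (i + 1), φ t) - ∫ t in a..u i, φ t := fun i hi => by
    have hi := Finset.mem_range.mp hi
    exact (intervalIntegral.integral_interval_sub_left (hφ' _ (hu_mem _ hi))
      (hφ' _ (hu_mem _ hi.le))).symm
  rw [Finset.sum_congr rfl fun i hi => (by rw [hdiff i hi])]
  calc _ ≤ K * (‖g (u N)‖ + ∑ i ∈ Finset.range N, ‖g (u (i + 1)) - g (u i)‖) :=
        Finset.norm_sum_range_sub_mul_le (F := fun i => ∫ t in a..u i, φ t) (G := fun i => g (u i))
          (by simp [hu₀])
          fun i hi => hK _ (hu_mem i hi)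
    _ ≤ _ := by
        rw [huN]
        gcongr
        exact hg.sum_norm_sub_le hu hu_mem

theorem tendsto_intervalIntegral_mul_comp_roundUp (hab : a < b)
    (hφ : IntervalIntegrable φ volume a b) (hg : BoundedVariationOn g (Icc a b)) :
    Tendsto (fun n : ℕ => ∫ t in a..b, φ t * g (roundUp a ((b - a) / (n + 1)) t)) atTop
      (𝓝 (∫ t in a..b, φ t * g t)) := by
  have hh : ∀ n : ℕ, 0 < (b - a) / (n + 1) := fun n => by have := sub_pos.mpr hab; positivity
  have hgrid : ∀ n : ℕ, b = a + ((n + 1 : ℕ) : ℤ) * ((b - a) / (n + 1)) := fun n => by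
    push_cast; field_simp; ring
  have hround : ∀ n : ℕ, ∀ t ∈ Ι a b, roundUp a ((b - a) / (n + 1)) t ∈ Icc a b := fun n t ht => by
    rw [uIoc_of_le hab.le] at ht
    refine ⟨ht.1.le.trans (le_roundUp (hh n) t), ?_⟩
    conv_rhs => rw [hgrid n]
    exact roundUp_le_of_le (hh n) (hgrid n ▸ ht.2)
  have hmesh : Tendsto (fun n : ℕ => (b - a) / (n + 1)) atTop (𝓝 0) := by
    simpa [Function.comp_def] using
      (tendsto_const_div_atTop_nhds_zero_nat (b - a)).comp (tendsto_add_atTop_nat 1)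
  refine intervalIntegral.tendsto_integral_filter_of_dominated_convergence
    (fun t => ‖φ t‖ * (‖g b‖ + (eVariationOn g (Icc a b)).toReal)) ?_ ?_ ?_ ?_
  · exact Eventually.of_forall fun n => (intervalIntegrable_iff.mp hφ).aestronglyMeasurable.mul
      (measurable_comp_roundUp g).aestronglyMeasurable
  · refine Eventually.of_forall fun n => Eventually.of_forall fun t ht => ?_
    rw [norm_mul]
    exact mul_le_mul_of_nonneg_left (hg.norm_le (hround n t ht) (right_mem_Icc.mpr hab.le))
      (norm_nonneg _)
  · exact hφ.norm.mul_const _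
  · filter_upwards [hg.locallyBoundedVariationOn.ae_differentiableWithinAt_of_mem] with t hdiff ht
    have htIcc : t ∈ Icc a b := Ioc_subset_Icc_self (uIoc_of_le hab.le ▸ ht)
    have hlim : Tendsto (fun n : ℕ => roundUp a ((b - a) / (n + 1)) t) atTop (𝓝[Icc a b] t) := by
      refine tendsto_nhdsWithin_iff.mpr ⟨?_, Eventually.of_forall fun n => hround n t ht⟩
      refine tendsto_of_tendsto_of_tendsto_of_le_of_le tendsto_const_nhds ?_
        (fun n => le_roundUp (hh n) t) (fun n => roundUp_le (hh n) t)
      simpa using tendsto_const_nhds.add hmesh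
    exact tendsto_const_nhds.mul ((hdiff htIcc).continuousWithinAt.tendsto.comp hlim)

theorem norm_intervalIntegral_mul_le_of_boundedVariationOn (hab : a ≤ b)
    (hφ : IntervalIntegrable φ volume a b) (hg : BoundedVariationOn g (Icc a b))
    (hK : ∀ s ∈ Icc a b, ‖∫ t in a..s, φ t‖ ≤ K) :
    ‖∫ t in a..b, φ t * g t‖ ≤ K * (‖g b‖ + (eVariationOn g (Icc a b)).toReal) := by
  rcases hab.eq_or_lt with rfl | hab
  · rw [intervalIntegral.integral_same, norm_zero]
    exact mul_nonneg ((norm_nonneg _).trans (hK a (left_mem_Icc.mpr le_rfl))) (by positivity)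
  refine le_of_tendsto (tendsto_intervalIntegral_mul_comp_roundUp hab hφ hg).norm
    (Eventually.of_forall fun n => ?_)
  set h := (b - a) / (n + 1)
  have hh : 0 < h := by have := sub_pos.mpr hab; positivity
  have hgrid : a + ((n + 1 : ℕ) : ℝ) * h = b := by simp only [h]; push_cast; field_simp; ring
  have hsum := intervalIntegral_mul_comp_roundUp (g := g) hh (hgrid ▸ hφ)
  rw [hgrid] at hsum
  rw [hsum]
  refine norm_sum_intervalIntegral_mul_le (fun i _ j _ hij => ?_) (by simp) hgrid hφ hg hK
  gcongr

end Stieltjes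

theorem continuous_intervalIntegral_mul_comp_sub {𝕜 : Type*} [RCLike 𝕜] {φ g : ℝ → 𝕜}
    {a b C : ℝ} (hφ : IntervalIntegrable φ volume a b) (hg : ∀ᵐ t, ContinuousAt g t)
    (hC : ∀ t, ‖g t‖ ≤ C) :
    Continuous fun x => ∫ t in a..b, φ t * g (x - t) := by
  have hg_meas := aestronglyMeasurable_of_ae_continuousAt hg
  refine continuous_iff_continuousAt.mpr fun x =>
    intervalIntegral.continuousAt_of_dominated_interval (bound := fun t => ‖φ t‖ * C) ?_ ?_
      (hφ.norm.mul_const C) ?_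
  · exact Eventually.of_forall fun y => (intervalIntegrable_iff.mp hφ).aestronglyMeasurable.mul
      (hg_meas.comp_quasiMeasurePreserving
        (Measure.measurePreserving_sub_left volume y).quasiMeasurePreserving).restrict
  · refine Eventually.of_forall fun y => Eventually.of_forall fun t _ => ?_
    rw [norm_mul]
    exact mul_le_mul_of_nonneg_left (hC _) (norm_nonneg _)
  · filter_upwards [(Measure.measurePreserving_sub_left volume x).quasiMeasurePreserving.ae hg]
      with t ht _
    exact continuousAt_const.mul
      (ContinuousAt.comp (f := fun y => y - t) ht (continuous_sub_right t).continuousAt)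

theorem Function.Periodic.norm_intervalIntegral_le {E : Type*} [NormedAddCommGroup E]
    [NormedSpace ℝ E] {f : ℝ → E} {T c a b : ℝ} (hf : Function.Periodic f T) (hT : 0 < T)
    (hfi : IntervalIntegrable f volume c (c + T)) (hab : a ≤ b) (hba : b ≤ a + T) :
    ‖∫ t in a..b, f t‖ ≤ ∫ t in c..c + T, ‖f t‖ :=
  calc ‖∫ t in a..b, f t‖ ≤ ∫ t in a..b, ‖f t‖ :=
        intervalIntegral.norm_integral_le_integral_norm hab
    _ ≤ ∫ t in a..a + T, ‖f t‖ :=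
        intervalIntegral.integral_mono_interval le_rfl hab hba
          (Eventually.of_forall fun _ => norm_nonneg _)
          (hf.intervalIntegrable hT.ne' hfi a (a + T)).norm
    _ = ∫ t in c..c + T, ‖f t‖ := (hf.comp _).intervalIntegral_add_eq a c

theorem Function.Periodic.bddAbove_range_norm {E : Type*} [SeminormedAddCommGroup E]
    {g : ℝ → E} {T a : ℝ} (hg : Function.Periodic g T) (hT : 0 < T)
    (hbv : BoundedVariationOn g (Icc a (a + T))) :
    BddAbove (range fun t => ‖g t‖) := by
  refine ⟨‖g a‖ + (eVariationOn g (Icc a (a + T))).toReal, ?_⟩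
  rintro _ ⟨t, rfl⟩
  obtain ⟨y, hy, hty⟩ := hg.exists_mem_Ico hT t a
  simp only [hty]
  exact hbv.norm_le (Ico_subset_Icc_self hy) (left_mem_Icc.mpr (by linarith))

section Torus

variable {f g : ℝ → ℂ}

theorem norm_intervalIntegral_le_alexNorm (hf : Function.Periodic f (2 * π))
    (hfi : IntervalIntegrable f volume (-π) π) {a b : ℝ} (hab : a ≤ b) (hba : b ≤ a + 2 * π) :
    ‖∫ t in a..b, f t‖ ≤ alexNorm f := by
  have hfi' : IntervalIntegrable f volume (-π) (-π + 2 * π) := by rwa [show -π + 2 * π = π by ring]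
  refine le_csSup ⟨∫ t in (-π)..(-π + 2 * π), ‖f t‖, ?_⟩ ⟨a, b, hab, hba, rfl⟩
  rintro _ ⟨α, β, hαβ, hβα, rfl⟩
  exact hf.norm_intervalIntegral_le two_pi_pos hfi' hαβ hβα

theorem eVariationOn_Icc_le_periodVariation (g : ℝ → ℂ) (a : ℝ) :
    eVariationOn g (Icc a (a + 2 * π)) ≤ periodVariation g :=
  le_iSup (fun a => eVariationOn g (Icc a (a + 2 * π))) a

theorem boundedVariationOn_of_periodVariation_ne_top (hg : periodVariation g ≠ ⊤) (a : ℝ) :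
    BoundedVariationOn g (Icc a (a + 2 * π)) :=
  ne_top_of_le_ne_top hg (eVariationOn_Icc_le_periodVariation g a)

theorem locallyBoundedVariationOn_of_periodVariation_ne_top (hg : periodVariation g ≠ ⊤) :
    LocallyBoundedVariationOn g univ :=
  locallyBoundedVariationOn_of_eVariationOn_Icc_add_le two_pi_pos hg
    (eVariationOn_Icc_le_periodVariation g)

theorem torusConv_periodic (hf : Function.Periodic f (2 * π)) :
    Function.Periodic (torusConv f g) (2 * π) := fun x => by
  simp only [torusConv, add_sub_right_comm, hf _]

theorem torusConv_eq_intervalIntegral_mul_sub (hf : Function.Periodic f (2 * π))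
    (hg : Function.Periodic g (2 * π)) (x : ℝ) :
    torusConv f g x = ∫ t in (-π)..π, f t * g (x - t) := by
  have hper : Function.Periodic (fun t => f t * g (x - t)) (2 * π) := fun t => by
    simp only [hf t, sub_add_eq_sub_sub, hg.sub_eq]
  calc torusConv f g x = ∫ t in (-π)..π, f (x - t) * g (x - (x - t)) := by simp [torusConv]
    _ = ∫ t in (x - π)..(x - π + 2 * π), f t * g (x - t) := by
        rw [intervalIntegral.integral_comp_sub_left (fun t => f t * g (x - t))]; ring_nf
    _ = _ := by rw [hper.intervalIntegral_add_eq (x - π) (-π)]; ring_nf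

theorem bddAbove_range_norm_of_periodVariation_ne_top (hg : Function.Periodic g (2 * π))
    (hgv : periodVariation g ≠ ⊤) : BddAbove (range fun t => ‖g t‖) :=
  hg.bddAbove_range_norm two_pi_pos (boundedVariationOn_of_periodVariation_ne_top hgv 0)

theorem alexNorm_nonneg (hf : Function.Periodic f (2 * π))
    (hfi : IntervalIntegrable f volume (-π) π) : 0 ≤ alexNorm f :=
  (norm_nonneg _).trans
    (norm_intervalIntegral_le_alexNorm hf hfi (le_refl 0) (by linarith [pi_pos]))

theorem continuous_torusConv (hf : Function.Periodic f (2 * π))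
    (hfi : IntervalIntegrable f volume (-π) π) (hg : Function.Periodic g (2 * π))
    (hgv : periodVariation g ≠ ⊤) : Continuous (torusConv f g) := by
  rw [funext (torusConv_eq_intervalIntegral_mul_sub hf hg)]
  exact continuous_intervalIntegral_mul_comp_sub hfi
    ((locallyBoundedVariationOn_of_periodVariation_ne_top hgv).ae_differentiableAt.mono
      fun _ h => h.continuousAt)
    (le_ciSup (bddAbove_range_norm_of_periodVariation_ne_top hg hgv))

theorem norm_torusConv_le (hf : Function.Periodic f (2 * π))
    (hfi : IntervalIntegrable f volume (-π) π) (hgv : periodVariation g ≠ ⊤) (x : ℝ) :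
    ‖torusConv f g x‖ ≤ alexNorm f * (‖g π‖ + (periodVariation g).toReal) := by
  have hf_int : ∀ a b, IntervalIntegrable f volume a b :=
    hf.intervalIntegrable two_pi_pos.ne' (t := -π) (by rwa [show -π + 2 * π = π by ring])
  have hg_bv : BoundedVariationOn g (Icc (-π) π) := by
    simpa [show -π + 2 * π = π by ring] using boundedVariationOn_of_periodVariation_ne_top hgv (-π)
  have hK : ∀ s ∈ Icc (-π) π, ‖∫ t in (-π)..s, f (x - t)‖ ≤ alexNorm f := fun s hs => by
    rw [intervalIntegral.integral_comp_sub_left f x]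
    exact norm_intervalIntegral_le_alexNorm hf hfi (by linarith [hs.1]) (by linarith [hs.2])
  have hV : (eVariationOn g (Icc (-π) π)).toReal ≤ (periodVariation g).toReal := by
    refine ENNReal.toReal_mono hgv ?_
    simpa [show -π + 2 * π = π by ring] using eVariationOn_Icc_le_periodVariation g (-π)
  calc ‖torusConv f g x‖ ≤ alexNorm f * (‖g π‖ + (eVariationOn g (Icc (-π) π)).toReal) :=
        norm_intervalIntegral_mul_le_of_boundedVariationOn (by linarith [pi_pos])
          (by simpa using (hf_int (x + π) (x - π)).comp_sub_left x) hg_bv hK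
    _ ≤ _ := by gcongr; exact alexNorm_nonneg hf hfi

end Torus

/-- For `f` periodic and integrable and `g` periodic of bounded
variation, `f∗g` is continuous and `2π`-periodic with
`‖f∗g‖_∞ ≤ ‖f‖_𝕋 ‖g‖_BV`. -/
theorem convolution_bv_continuous (f g : ℝ → ℂ)
    (hfper : Function.Periodic f (2 * π))
    (hfint : IntervalIntegrable f volume (-π) π)
    (hgper : Function.Periodic g (2 * π))
    (hgbv : periodVariation g ≠ ⊤) :
    Continuous (torusConv f g)
    ∧ Function.Periodic (torusConv f g) (2 * π)
    ∧ ∀ x : ℝ, ‖torusConv f g x‖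
        ≤ alexNorm f * ((⨆ t : ℝ, ‖g t‖) + (periodVariation g).toReal) := by
  refine ⟨continuous_torusConv hfper hfint hgper hgbv, torusConv_periodic hfper, fun x => ?_⟩
  calc ‖torusConv f g x‖ ≤ alexNorm f * (‖g π‖ + (periodVariation g).toReal) :=
        norm_torusConv_le hfper hfint hgbv x
    _ ≤ _ := by
        gcongr
        · exact alexNorm_nonneg hfper hfint
        · exact le_ciSup (bddAbove_range_norm_of_periodVariation_ne_top hgper hgbv) π
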